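/- Consider the system dx/dt = −2x − y + 3x² + y² − x(x² + y²), dy/dt = −1 + x + 2xy − y(x² + y²), and let F(x,y) = (((x − 1)² + y²)/(1 − (x − 1)² − y²))·exp(−2·arctan(y/(x − 1))) on the set G = {(x,y) : x ≠ 1 and (x − 1)² + y² ≠ 1}. Then F is differentiable on G and (−2x − y + 3x² + y² − x(x² + y²))·∂F/∂x(x,y) + (−1 + x + 2xy − y(x² + y²))·∂F/∂y(x,y) = 0 for all (x,y) ∈ G; that is, F is a general autonomous integral of the system on any domain contained in G. -/

import Mathlib

/-- `F(x,y) = (((x − 1)² + y²)/(1 − (x − 1)² − y²))·exp(−2·arctan(y/(x − 1)))`. -/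
noncomputable def F10 : ℝ × ℝ → ℝ :=
  fun p => (((p.1 - 1) ^ 2 + p.2 ^ 2) / (1 - (p.1 - 1) ^ 2 - p.2 ^ 2)) *
    Real.exp (-2 * Real.arctan (p.2 / (p.1 - 1)))

/-!
Shift the origin to `(1, 0)`: with `u = x - 1`, `ρ = u² + y²` and `θ = arctan (y / u)` the polar
angle, the vector field `(X, Y)` satisfies the polynomial identity
`u X + y Y = (1 - ρ) (u Y - y X)`, i.e. `ρ̇ = 2 ρ (1 - ρ) θ̇` along solutions. Since
`F = ρ / (1 - ρ) · exp (-2 θ)` has logarithmic derivative `ρ̇ / (ρ (1 - ρ)) - 2 θ̇`, it is constant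
along solutions.
-/

section

variable {E : Type*} [NormedAddCommGroup E] [NormedSpace ℝ E] {p : E}

theorem HasFDerivAt.div {c d : E → ℝ} {c' d' : E →L[ℝ] ℝ} (hc : HasFDerivAt c c' p)
    (hd : HasFDerivAt d d' p) (hp : d p ≠ 0) :
    HasFDerivAt (fun q => c q / d q) ((d p ^ 2)⁻¹ • (d p • c' - c p • d')) p := by
  have h := hc.fun_mul ((hasDerivAt_inv hp).comp_hasFDerivAt p hd)
  simp only [Function.comp_apply, ← div_eq_mul_inv] at h
  refine h.congr_fderiv ?_
  ext v
  simp only [neg_smul, smul_neg, add_apply, neg_apply, smul_apply, smul_eq_mul, sub_apply]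
  field_simp
  ring

theorem HasFDerivAt.arctan_div {u w : E → ℝ} {u' w' : E →L[ℝ] ℝ} (hw : HasFDerivAt w w' p)
    (hu : HasFDerivAt u u' p) (hp : u p ≠ 0) :
    HasFDerivAt (fun q => Real.arctan (w q / u q))
      ((u p ^ 2 + w p ^ 2)⁻¹ • (u p • w' - w p • u')) p := by
  refine (hw.div hu hp).arctan.congr_fderiv ?_
  have : u p ^ 2 + w p ^ 2 ≠ 0 := by positivity
  ext v
  simp only [one_div, smul_apply, sub_apply, smul_eq_mul]
  field_simp

theorem HasFDerivAt.div_one_sub_mul_exp {ρ θ : E → ℝ} {ρ' θ' : E →L[ℝ] ℝ}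
    (hρ : HasFDerivAt ρ ρ' p) (hθ : HasFDerivAt θ θ' p) (c : ℝ) (hp : ρ p ≠ 1) :
    HasFDerivAt (fun q => ρ q / (1 - ρ q) * Real.exp (c * θ q))
      (Real.exp (c * θ p) • (((1 - ρ p) ^ 2)⁻¹ • ρ' + (c * ρ p / (1 - ρ p)) • θ')) p := by
  have hp' : 1 - ρ p ≠ 0 := sub_ne_zero.mpr hp.symm
  refine ((hρ.div ((hasFDerivAt_const 1 p).sub hρ) hp').fun_mul
    (hθ.const_mul c).exp).congr_fderiv ?_
  ext v
  simp only [Pi.sub_apply, zero_sub, smul_neg, sub_neg_eq_add, smul_add, add_apply, smul_apply,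
    smul_eq_mul]
  field_simp
  ring

end

theorem F10_eq_div_one_sub_mul_exp :
    F10 = fun q => ((q.1 - 1) ^ 2 + q.2 ^ 2) / (1 - ((q.1 - 1) ^ 2 + q.2 ^ 2)) *
      Real.exp (-2 * Real.arctan (q.2 / (q.1 - 1))) := by
  ext q
  simp only [F10, sub_sub]

theorem radial_eq_one_sub_mul_angular (x y : ℝ) :
    (x - 1) * (-2 * x - y + 3 * x ^ 2 + y ^ 2 - x * (x ^ 2 + y ^ 2)) +
        y * (-1 + x + 2 * x * y - y * (x ^ 2 + y ^ 2)) =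
      (1 - ((x - 1) ^ 2 + y ^ 2)) *
        ((x - 1) * (-1 + x + 2 * x * y - y * (x ^ 2 + y ^ 2)) -
          y * (-2 * x - y + 3 * x ^ 2 + y ^ 2 - x * (x ^ 2 + y ^ 2))) := by
  ring

/-- `F` is a general autonomous integral of the system
`dx/dt = −2x − y + 3x² + y² − x(x² + y²)`,
`dy/dt = −1 + x + 2xy − y(x² + y²)` on
`G = {(x,y) : x ≠ 1 ∧ (x − 1)² + y² ≠ 1}`. -/
theorem F10_general_autonomous_integral :
    ∀ p : ℝ × ℝ, p.1 ≠ 1 → (p.1 - 1) ^ 2 + p.2 ^ 2 ≠ 1 →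
      DifferentiableAt ℝ F10 p ∧
      (-2 * p.1 - p.2 + 3 * p.1 ^ 2 + p.2 ^ 2 - p.1 * (p.1 ^ 2 + p.2 ^ 2)) *
          fderiv ℝ F10 p (1, 0) +
        (-1 + p.1 + 2 * p.1 * p.2 - p.2 * (p.1 ^ 2 + p.2 ^ 2)) *
          fderiv ℝ F10 p (0, 1) = 0 := by
  rintro ⟨x, y⟩ hx hr
  rw [F10_eq_div_one_sub_mul_exp]
  have hu : HasFDerivAt (fun q : ℝ × ℝ => q.1 - 1) (ContinuousLinearMap.fst ℝ ℝ ℝ) (x, y) :=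
    hasFDerivAt_fst.sub_const 1
  have hw : HasFDerivAt (fun q : ℝ × ℝ => q.2) (ContinuousLinearMap.snd ℝ ℝ ℝ) (x, y) :=
    hasFDerivAt_snd
  have hF := ((hu.pow 2).fun_add (hw.pow 2)).div_one_sub_mul_exp
    (hw.arctan_div hu (sub_ne_zero.mpr hx)) (-2) hr
  refine ⟨hF.differentiableAt, ?_⟩
  rw [hF.fderiv]
  simp only [nsmul_eq_mul, Nat.cast_ofNat, Nat.add_one_sub_one, pow_one, add_apply, smul_apply,
    sub_apply, ContinuousLinearMap.coe_fst', ContinuousLinearMap.coe_snd', smul_eq_mul]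
  have hρ : (x - 1) ^ 2 + y ^ 2 ≠ 0 := by positivity
  have hρ' : 1 - ((x - 1) ^ 2 + y ^ 2) ≠ 0 := sub_ne_zero.mpr hr.symm
  field_simp
  linear_combination radial_eq_one_sub_mul_angular x y
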